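/- Let G and H be locally compact second countable Hausdorff topological groups with left Haar measures μ and ν respectively, and let θ : G → H be a continuous homomorphism. Then the pushforward measure θ_*(μ) and ν are mutually absolutely continuous (i.e. for every Borel set E ⊆ H, μ(θ⁻¹(E)) = 0 if and only if ν(E) = 0) if and only if θ is surjective. -/

import Mathlib

open MeasureTheory Set Function Pointwise

/-!
If `θ` is onto, both `μ (θ ⁻¹' E) * ν univ` and `ν E⁻¹ * μ univ` compute, by Fubini, the
`μ × ν`-measure of `{(g, h) | h⁻¹ * θ g ∈ E}`: left invariance makes all vertical slices
have measure `ν E⁻¹` and, since every `h` is some `θ g₀`, all horizontal slices have measure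
`μ (θ ⁻¹' E)`. Conversely the range of `θ` is σ-compact, hence Borel, and its complement has
empty preimage; so the range is a conull subgroup, and a conull subgroup is everything, since a
coset disjoint from it would be a translate of it inside a null set.
-/

theorem IsSigmaCompact.measurableSet {X : Type*} [TopologicalSpace X] [T2Space X]
    [MeasurableSpace X] [OpensMeasurableSpace X] {s : Set X} (hs : IsSigmaCompact s) :
    MeasurableSet s := by
  obtain ⟨K, hK, rfl⟩ := hs
  exact MeasurableSet.iUnion fun n => (hK n).isClosed.measurableSet

theorem Subgroup.eq_top_of_measure_compl_eq_zero {H : Type*} [Group H] [MeasurableSpace H]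
    [MeasurableMul H] (ν : Measure H) [ν.IsMulLeftInvariant] [NeZero ν] (S : Subgroup H)
    (hS : ν (S : Set H)ᶜ = 0) : S = ⊤ := by
  rw [eq_top_iff']
  intro x
  by_contra hx
  have htranslate_sub : (fun y => x⁻¹ * y) ⁻¹' S ⊆ (S : Set H)ᶜ := fun y hy hyS =>
    hx (by simpa using S.mul_mem hyS (S.inv_mem hy))
  have hS_null : ν S = 0 := by
    rw [← measure_preimage_mul ν x⁻¹]
    exact measure_mono_null htranslate_sub hS
  apply NeZero.ne ν
  rw [← Measure.measure_univ_eq_zero, ← union_compl_self (S : Set H)]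
  exact measure_union_null hS_null hS

section Fubini

variable {G H : Type*} [Group G] [MeasurableSpace G] [MeasurableMul G]
  [Group H] [MeasurableSpace H] [MeasurableMul₂ H] [MeasurableInv H]
  (μ : Measure G) (ν : Measure H) [SFinite μ] [SFinite ν]
  [μ.IsMulLeftInvariant] [ν.IsMulLeftInvariant]

theorem MonoidHom.measure_preimage_mul_measure_univ_of_surjective {θ : G →* H}
    (hθ : Measurable θ) (hsurj : Surjective θ) {E : Set H} (hE : MeasurableSet E) :
    μ (θ ⁻¹' E) * ν univ = ν E⁻¹ * μ univ := by
  set S : Set (G × H) := (fun p => p.2⁻¹ * θ p.1) ⁻¹' E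
  have hS : MeasurableSet S :=
    (measurable_snd.inv.mul (hθ.comp measurable_fst)) hE
  have vertical_slice (g : G) : ν (Prod.mk g ⁻¹' S) = ν E⁻¹ := by
    have : Prod.mk g ⁻¹' S = (fun h => (θ g)⁻¹ * h) ⁻¹' E⁻¹ := by
      ext h
      simp [S]
    rw [this, measure_preimage_mul]
  have horizontal_slice (h : H) : μ ((·, h) ⁻¹' S) = μ (θ ⁻¹' E) := by
    obtain ⟨g₀, rfl⟩ := hsurj h
    have : (·, θ g₀) ⁻¹' S = (fun g => g₀⁻¹ * g) ⁻¹' (θ ⁻¹' E) := by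
      ext g
      simp [S]
    rw [this, measure_preimage_mul]
  calc μ (θ ⁻¹' E) * ν univ = μ.prod ν S := by
        simp [Measure.prod_apply_symm hS, horizontal_slice]
    _ = ν E⁻¹ * μ univ := by
        simp [Measure.prod_apply hS, vertical_slice]

theorem MonoidHom.measure_preimage_eq_zero_iff_of_surjective [NeZero μ] [NeZero ν]
    {θ : G →* H} (hθ : Measurable θ) (hsurj : Surjective θ) {E : Set H}
    (hE : MeasurableSet E) : μ (θ ⁻¹' E) = 0 ↔ ν E = 0 := by
  have key := θ.measure_preimage_mul_measure_univ_of_surjective μ ν hθ hsurj hE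
  simpa [Measure.measure_univ_eq_zero, NeZero.ne] using congrArg (· = 0) key

end Fubini

theorem pushforward_equivalent_iff_surjective_general {G H : Type*}
    [Group G] [TopologicalSpace G] [IsTopologicalGroup G] [LocallyCompactSpace G]
    [SecondCountableTopology G] [MeasurableSpace G] [BorelSpace G]
    [Group H] [TopologicalSpace H] [IsTopologicalGroup H] [LocallyCompactSpace H]
    [SecondCountableTopology H] [T2Space H] [MeasurableSpace H] [BorelSpace H]
    (μ : Measure G) (ν : Measure H) [μ.IsHaarMeasure]
    [ν.IsHaarMeasure]
    (θ : G →* H) (hθ : Continuous θ) :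
    (∀ E : Set H, MeasurableSet E → (μ (⇑θ ⁻¹' E) = 0 ↔ ν E = 0)) ↔
      Function.Surjective θ := by
  constructor
  · intro hequiv
    have hrange_conull : ν (range θ)ᶜ = 0 :=
      (hequiv _ (isSigmaCompact_range hθ).measurableSet.compl).1 (by simp)
    exact θ.range_eq_top.mp
      (θ.range.eq_top_of_measure_compl_eq_zero ν (by simpa using hrange_conull))
  · exact fun hsurj E hE =>
      θ.measure_preimage_eq_zero_iff_of_surjective μ ν hθ.measurable hsurj hE

/-- For a continuous homomorphism `θ : G → H` of locally compact second countable groups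
with Haar measures `μ`, `ν`, the pushforward `θ_*(μ)` and `ν` are mutually absolutely
continuous iff `θ` is surjective. -/
theorem pushforward_equivalent_iff_surjective {G H : Type*}
    [Group G] [TopologicalSpace G] [IsTopologicalGroup G] [LocallyCompactSpace G]
    [SecondCountableTopology G] [T2Space G] [MeasurableSpace G] [BorelSpace G]
    [Group H] [TopologicalSpace H] [IsTopologicalGroup H] [LocallyCompactSpace H]
    [SecondCountableTopology H] [T2Space H] [MeasurableSpace H] [BorelSpace H]
    (μ : Measure G) (ν : Measure H) [μ.IsHaarMeasure] [μ.Regular]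
    [ν.IsHaarMeasure] [ν.Regular]
    (θ : G →* H) (hθ : Continuous θ) :
    (∀ E : Set H, MeasurableSet E → (μ (⇑θ ⁻¹' E) = 0 ↔ ν E = 0)) ↔
      Function.Surjective θ :=
  pushforward_equivalent_iff_surjective_general μ ν θ hθ
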